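/- Let (X, δ) be a hyperconvex diversity and let (X, d) be its induced metric space, d(x,y) = δ({x,y}). Then (X, d) is a complete metric space. -/

import Mathlib

/-!
Given a Cauchy sequence `u`, the function `r A := lim_n δ(A ∪ {uₙ})` (the limit exists because
`x ↦ δ(A ∪ {x})` is 1-Lipschitz) satisfies the hypothesis of hyperconvexity: `δ(⋃ 𝒜)` is bounded by
`δ(⋃ 𝒜 ∪ {uₙ}) ≤ ∑_{A ∈ 𝒜} δ(A ∪ {uₙ})` for every `n`. A point `z` it produces has
`d(z, u_k) ≤ r {u_k} = lim_n d(uₙ, u_k)`, which tends to `0` since `u` is Cauchy, so `uₖ → z`.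
-/

/-- A diversity on `X`: a real-valued function on finite subsets of `X` which is
nonnegative, vanishes exactly on sets of cardinality at most one, and satisfies the
triangle inequality `δ(A ∪ C) ≤ δ(A ∪ B) + δ(B ∪ C)` for nonempty `B`. -/
structure Diversity (X : Type*) [DecidableEq X] where
  delta : Finset X → ℝ
  nonneg : ∀ A, 0 ≤ delta A
  eq_zero_iff : ∀ A, delta A = 0 ↔ A.card ≤ 1
  triangle : ∀ A B C : Finset X, B.Nonempty →
    delta (A ∪ C) ≤ delta (A ∪ B) + delta (B ∪ C)

namespace Diversity

variable {X : Type*} [DecidableEq X]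

/-- A diversity is hyperconvex if for every `r : ⟨X⟩ → ℝ` with `r ∅ = 0` such that
`δ(⋃_{A ∈ 𝒜} A) ≤ ∑_{A ∈ 𝒜} r A` for every finite collection `𝒜` of finite subsets
of `X`, there is `z ∈ X` with `δ({z} ∪ Y) ≤ r Y` for all finite `Y ⊆ X`. -/
def Hyperconvex (D : Diversity X) : Prop :=
  ∀ r : Finset X → ℝ, r ∅ = 0 →
    (∀ 𝒜 : Finset (Finset X), D.delta (𝒜.sup id) ≤ ∑ A ∈ 𝒜, r A) →
    ∃ z : X, ∀ Y : Finset X, D.delta (insert z Y) ≤ r Y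

/-- A diversity is bounded if its values are uniformly bounded above. -/
def Bounded (D : Diversity X) : Prop :=
  ∃ M : ℝ, 0 ≤ M ∧ ∀ A : Finset X, D.delta A ≤ M

end Diversity

open Filter Topology

namespace Diversity

variable {X : Type*} [DecidableEq X] (D : Diversity X)

lemma delta_singleton (b : X) : D.delta {b} = 0 :=
  (D.eq_zero_iff _).2 (by simp)

lemma delta_le_delta_insert (b : X) (A : Finset X) : D.delta A ≤ D.delta (insert b A) := by
  simpa [Finset.union_singleton, delta_singleton] using D.triangle A {b} ∅ (by simp)

lemma delta_insert_le_delta_insert_add (b c : X) (A : Finset X) :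
    D.delta (insert b A) ≤ D.delta (insert c A) + D.delta {c, b} := by
  simpa [Finset.union_singleton, Finset.pair_comm] using D.triangle A {c} {b} (by simp)

lemma delta_insert_sup_le_sum (b : X) (𝒜 : Finset (Finset X)) :
    D.delta (insert b (𝒜.sup id)) ≤ ∑ A ∈ 𝒜, D.delta (insert b A) := by
  induction 𝒜 using Finset.induction_on with
  | empty => simp [delta_singleton]
  | @insert a 𝒜 ha ih =>
    have hsplit : insert b (a ⊔ 𝒜.sup id) = insert b a ∪ insert b (𝒜.sup id) := by
      ext x; simp only [Finset.sup_eq_union, Finset.mem_insert, Finset.mem_union]; tauto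
    have htri := D.triangle (insert b a) {b} (insert b (𝒜.sup id)) (by simp)
    rw [show insert b a ∪ {b} = insert b a by simp,
      show {b} ∪ insert b (𝒜.sup id) = insert b (𝒜.sup id) by simp] at htri
    rw [Finset.sup_insert, Finset.sum_insert ha, id, hsplit]
    linarith

lemma lipschitzWith_delta_insert [PseudoMetricSpace X] (hd : ∀ x y : X, dist x y = D.delta {x, y})
    (A : Finset X) : LipschitzWith 1 fun x ↦ D.delta (insert x A) :=
  LipschitzWith.of_le_add fun x y ↦ by
    simpa only [dist_comm x y, hd] using D.delta_insert_le_delta_insert_add x y A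

end Diversity

lemma tendsto_of_cauchySeq_of_dist_le_limit {X : Type*} [PseudoMetricSpace X] {u : ℕ → X}
    (hu : CauchySeq u) {r : ℕ → ℝ} (hr : ∀ k, Tendsto (fun n ↦ dist (u n) (u k)) atTop (𝓝 (r k)))
    {z : X} (hz : ∀ k, dist z (u k) ≤ r k) : Tendsto u atTop (𝓝 z) := by
  refine Metric.tendsto_atTop.2 fun ε hε ↦ ?_
  obtain ⟨N, hN⟩ := Metric.cauchySeq_iff.1 hu (ε / 2) (half_pos hε)
  refine ⟨N, fun k hk ↦ ?_⟩
  have hrk : r k ≤ ε / 2 :=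
    le_of_tendsto (hr k) (eventually_atTop.2 ⟨N, fun n hn ↦ (hN n hn k hk).le⟩)
  rw [dist_comm]
  linarith [hz k]

/-- If `(X, δ)` is a hyperconvex diversity, then its induced metric
space `(X, d)` with `d(x, y) = δ {x, y}` is complete. -/
theorem completeSpace_of_hyperconvex_diversity
    {X : Type*} [DecidableEq X] [MetricSpace X] (D : Diversity X)
    (hd : ∀ x y : X, dist x y = D.delta {x, y})
    (hH : D.Hyperconvex) :
    CompleteSpace X := by
  refine Metric.complete_of_cauchySeq_tendsto fun u hu ↦ ?_
  set r : Finset X → ℝ := fun A ↦ limUnder atTop fun n ↦ D.delta (insert (u n) A)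
  have hr : ∀ A, Tendsto (fun n ↦ D.delta (insert (u n) A)) atTop (𝓝 (r A)) := fun A ↦
    tendsto_nhds_limUnder <| cauchySeq_tendsto_of_complete <|
      (D.lipschitzWith_delta_insert hd A).uniformContinuous.comp_cauchySeq hu
  have hr_empty : r ∅ = 0 :=
    tendsto_nhds_unique (hr ∅) (by simp [D.delta_singleton])
  have hr_admissible : ∀ 𝒜 : Finset (Finset X), D.delta (𝒜.sup id) ≤ ∑ A ∈ 𝒜, r A :=
    fun 𝒜 ↦ ge_of_tendsto' (tendsto_finsetSum 𝒜 fun A _ ↦ hr A) fun n ↦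
      (D.delta_le_delta_insert (u n) _).trans (D.delta_insert_sup_le_sum (u n) 𝒜)
  obtain ⟨z, hz⟩ := hH r hr_empty hr_admissible
  refine ⟨z, tendsto_of_cauchySeq_of_dist_le_limit hu (r := fun k ↦ r {u k}) ?_ ?_⟩
  · simpa only [hd] using fun k ↦ hr {u k}
  · simpa only [hd] using fun k ↦ hz {u k}
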